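/- arXiv:2203.08592 — 4 statements merged into one kernel-verified Lean document; each statement's English description precedes it below -/
import Mathlib

section
/- Let G be a group with finite monoid generating set A and word problem L = wp_A(G). Then every nonempty word w ∈ L can be written in a unique way as a concatenation of elements of L \ {ε} that cannot themselves be factored into shorter elements of L \ {ε}; i.e., L is a free submonoid of A*. -/
/-! The word problem is closed under cancelling a prefix that lies in it, so a prefix of an
irreducible word that lies in the word problem is either empty or the whole word. Hence of two
irreducible words, one a prefix of the other, both are equal, and two factorizations of the same
word agree factor by factor. Existence follows by induction on the length. -/

/-- The word problem of `G` over the finite monoid generating set `A`. -/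
def wp {A G : Type} [Group G] (f : A → G) : Set (List A) :=
  {w : List A | (w.map f).prod = 1}

/-- A word of the word problem is irreducible (a free generator) if it is nonempty
and cannot be written as a concatenation of two nonempty elements of the word problem. -/
def Irred {A G : Type} [Group G] (f : A → G) (u : List A) : Prop :=
  u ∈ wp f ∧ u ≠ [] ∧
    ¬ ∃ v w : List A, v ∈ wp f ∧ w ∈ wp f ∧ v ≠ [] ∧ w ≠ [] ∧ u = v ++ w

lemma append_mem_wp_iff {A G : Type} [Group G] {f : A → G} {u v : List A} (hu : u ∈ wp f) :
    u ++ v ∈ wp f ↔ v ∈ wp f := by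
  simp_all [wp]

namespace Irred

variable {A G : Type} [Group G] {f : A → G}

lemma eq_of_prefix {u v : List A} (hu : u ∈ wp f) (hu₀ : u ≠ []) (hv : Irred f v)
    (huv : u <+: v) : u = v := by
  obtain ⟨c, rfl⟩ := huv
  have hc : c ∈ wp f := (append_mem_wp_iff hu).1 hv.1
  by_contra hne
  exact hv.2.2 ⟨u, c, hu, hc, hu₀, fun hc₀ => hne (by simp [hc₀]), rfl⟩

lemma eq_of_append_eq_append {u v s t : List A} (hu : Irred f u) (hv : Irred f v)
    (h : u ++ s = v ++ t) : u = v := by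
  rcases List.prefix_or_prefix_of_prefix (List.prefix_append u s)
      (h ▸ List.prefix_append v t) with huv | hvu
  · exact eq_of_prefix hu.1 hu.2.1 hv huv
  · exact (eq_of_prefix hv.1 hv.2.1 hu hvu).symm

theorem exists_flatten_eq (w : List A) (hw : w ∈ wp f) (hw₀ : w ≠ []) :
    ∃ l : List (List A), (∀ u ∈ l, Irred f u) ∧ l.flatten = w := by
  by_cases hirr : Irred f w
  · exact ⟨[w], by simpa using hirr, by simp⟩
  obtain ⟨v, t, hv, ht, hv₀, ht₀, hvt⟩ :
      ∃ v t : List A, v ∈ wp f ∧ t ∈ wp f ∧ v ≠ [] ∧ t ≠ [] ∧ w = v ++ t := by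
    simpa [Irred, hw, hw₀] using hirr
  obtain ⟨l₁, hl₁, hl₁v⟩ := exists_flatten_eq v hv hv₀
  obtain ⟨l₂, hl₂, hl₂t⟩ := exists_flatten_eq t ht ht₀
  refine ⟨l₁ ++ l₂, fun u hu => ?_, by rw [List.flatten_append, hl₁v, hl₂t, hvt]⟩
  rcases List.mem_append.1 hu with hu | hu
  exacts [hl₁ u hu, hl₂ u hu]
termination_by w.length
decreasing_by
  all_goals rw [hvt, List.length_append]
  · have := List.length_pos_iff.2 ht₀; omega
  · have := List.length_pos_iff.2 hv₀; omega

theorem eq_of_flatten_eq :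
    ∀ {l₁ l₂ : List (List A)}, (∀ u ∈ l₁, Irred f u) → (∀ u ∈ l₂, Irred f u) →
      l₁.flatten = l₂.flatten → l₁ = l₂
  | [], [], _, _, _ => rfl
  | [], v :: _, _, h₂, h => absurd (List.append_eq_nil_iff.1 h.symm).1 (h₂ v (by simp)).2.1
  | u :: _, [], h₁, _, h => absurd (List.append_eq_nil_iff.1 h).1 (h₁ u (by simp)).2.1
  | u :: l₁, v :: l₂, h₁, h₂, h => by
    simp only [List.flatten_cons] at h
    obtain rfl := eq_of_append_eq_append (h₁ u (by simp)) (h₂ v (by simp)) h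
    rw [eq_of_flatten_eq (fun x hx => h₁ x (by simp [hx])) (fun x hx => h₂ x (by simp [hx]))
      (List.append_cancel_left h)]

end Irred

theorem stmt_1_general {A G : Type} [Group G] (f : A → G) :
    ∀ w ∈ wp f, w ≠ [] →
      ∃! l : List (List A), (∀ u ∈ l, Irred f u) ∧ l.flatten = w := by
  intro w hw hw₀
  obtain ⟨l, hl, rfl⟩ := Irred.exists_flatten_eq w hw hw₀
  exact ⟨l, ⟨hl, rfl⟩, fun l' ⟨hl', h⟩ => Irred.eq_of_flatten_eq hl' hl h⟩

/-- Every nonempty word of the word problem factors uniquely as a concatenation of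
irreducible elements: the word problem is a free submonoid of `A*`. -/
theorem stmt_1 {A G : Type} [Fintype A] [Group G] (f : A → G)
    (hgen : Function.Surjective fun w : List A => (w.map f).prod) :
    ∀ w ∈ wp f, w ≠ [] →
      ∃! l : List (List A), (∀ u ∈ l, Irred f u) ∧ l.flatten = w :=
  stmt_1_general f
end

section
/- Let G be a group with finite monoid generating set A. The set of free generators (irreducible nonempty elements) of the word problem wp_A(G) is a bifix code: no free generator is a proper prefix of another, and no free generator is a proper suffix of another. -/
/-! Since `wp f` is the preimage of `1` under a monoid morphism into a group, it is closed
under left and right quotients; hence an irreducible word has no proper nonempty prefix or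
suffix in `wp f`. -/

section

variable {A G : Type} [Group G] {f : A → G} {u v w : List A}

theorem append_mem_wp_iff_right (hu : u ∈ wp f) : u ++ w ∈ wp f ↔ w ∈ wp f := by
  simp only [wp, Set.mem_ofPred_eq, List.map_append, List.prod_append] at hu ⊢
  rw [hu, one_mul]

theorem append_mem_wp_iff_left (hu : u ∈ wp f) : w ++ u ∈ wp f ↔ w ∈ wp f := by
  simp only [wp, Set.mem_ofPred_eq, List.map_append, List.prod_append] at hu ⊢
  rw [hu, mul_one]

theorem Irred.eq_of_isPrefix (hv : Irred f v) (hu : u ∈ wp f) (hune : u ≠ [])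
    (huv : u <+: v) : u = v := by
  obtain ⟨w, rfl⟩ := huv
  obtain ⟨hmem, -, hirr⟩ := hv
  rcases eq_or_ne w [] with rfl | hw
  · exact (List.append_nil u).symm
  · exact (hirr ⟨u, w, hu, (append_mem_wp_iff_right hu).1 hmem, hune, hw, rfl⟩).elim

theorem Irred.eq_of_isSuffix (hv : Irred f v) (hu : u ∈ wp f) (hune : u ≠ [])
    (huv : u <:+ v) : u = v := by
  obtain ⟨w, rfl⟩ := huv
  obtain ⟨hmem, -, hirr⟩ := hv
  rcases eq_or_ne w [] with rfl | hw
  · exact (List.nil_append u).symm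
  · exact (hirr ⟨w, u, (append_mem_wp_iff_left hu).1 hmem, hu, hw, hune, rfl⟩).elim

end

theorem stmt_2_general {A G : Type} [Group G] (f : A → G) :
    ∀ u v : List A, Irred f u → Irred f v →
      (u <+: v → u = v) ∧ (u <:+ v → u = v) :=
  fun _ _ ⟨hu, hune, _⟩ hv => ⟨hv.eq_of_isPrefix hu hune, hv.eq_of_isSuffix hu hune⟩

/-- The set of free generators of the word problem is a bifix code: no free generator
is a proper prefix, or a proper suffix, of another. -/
theorem stmt_2 {A G : Type} [Fintype A] [Group G] (f : A → G)
    (hgen : Function.Surjective fun w : List A => (w.map f).prod) :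
    ∀ u v : List A, Irred f u → Irred f v →
      (u <+: v → u = v) ∧ (u <:+ v → u = v) :=
  stmt_2_general f
end

section
/- Let G be a group generated (as a monoid) by a finite set A ⊆ G. If for every finite monoid generating set B of G the word problem wp_B(G) is closed under reversal, then G is commutative. -/
/-! Adjoin `x`, `y` and `(x * y)⁻¹` to a finite generating set. The word `x y (x * y)⁻¹`
evaluates to `1`, so its reversal `(x * y)⁻¹ y x` does too, i.e. `y * x = x * y`. -/

theorem mul_comm_of_prod_reverse_eq_one {G : Type*} [Group G] {x y : G}
    (h : [x, y, (x * y)⁻¹].reverse.prod = 1) : x * y = y * x := by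
  simpa [← mul_inv_rev, inv_mul_eq_one] using h

/-- If a finitely generated group has the property that for every finite monoid
generating set the word problem is closed under reversal, then the group is
commutative. -/
theorem stmt_9 {G : Type} [Group G] (A : Finset G)
    (hA : Submonoid.closure (A : Set G) = ⊤)
    (H : ∀ B : Finset G, Submonoid.closure (B : Set G) = ⊤ →
      ∀ w : List G, (∀ a ∈ w, a ∈ B) → w.prod = 1 → w.reverse.prod = 1) :
    ∀ x y : G, x * y = y * x := by
  classical
  intro x y
  set B : Finset G := insert x (insert y (insert (x * y)⁻¹ A))
  have hB : Submonoid.closure (B : Set G) = ⊤ :=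
    top_unique <| hA ▸ Submonoid.closure_mono fun a ha => by simp [B, Finset.mem_coe.mp ha]
  exact mul_comm_of_prod_reverse_eq_one <| H B hB _ (by simp [B]) (by simp)
end

section
/- Every finitely generated non-commutative group G has a finite monoid generating set B for which the word problem wp_B(G) is not closed under reversal. -/
/-! Adjoin `a`, `b` and `c = (a * b)⁻¹` to a generating set, for non-commuting `a`, `b`:
the word `a b c` is trivial, while its reversal `c b a` evaluates to `(a * b)⁻¹ * (b * a)`,
which is trivial only if `a` and `b` commute. -/

theorem Submonoid.closure_union_eq_top_of_left {M : Type*} [Monoid M] {s : Set M}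
    (hs : Submonoid.closure s = ⊤) (t : Set M) : Submonoid.closure (s ∪ t) = ⊤ :=
  top_unique (hs ▸ Submonoid.closure_mono Set.subset_union_left)

section TriangleWord

variable {G : Type*} [Group G]

theorem prod_triangleWord (a b : G) : [a, b, (a * b)⁻¹].prod = 1 := by
  simp [← mul_assoc]

theorem prod_reverse_triangleWord_eq_one_iff (a b : G) :
    [a, b, (a * b)⁻¹].reverse.prod = 1 ↔ b * a = a * b := by
  simp only [List.reverse_cons, List.reverse_nil, List.nil_append, List.cons_append,
    List.prod_cons, List.prod_nil, mul_one, ← mul_assoc]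
  rw [mul_assoc, inv_mul_eq_one, eq_comm]

end TriangleWord

/-- Every finitely generated non-commutative group has a finite monoid generating
set for which the word problem is not closed under reversal. -/
theorem stmt_10 {G : Type} [Group G] (A : Finset G)
    (hA : Submonoid.closure (A : Set G) = ⊤)
    (hnc : ∃ a b : G, a * b ≠ b * a) :
    ∃ B : Finset G, Submonoid.closure (B : Set G) = ⊤ ∧
      ∃ w : List G, (∀ a ∈ w, a ∈ B) ∧ w.prod = 1 ∧ w.reverse.prod ≠ 1 := by
  classical
  obtain ⟨a, b, hab⟩ := hnc
  refine ⟨A ∪ {a, b, (a * b)⁻¹}, ?_, [a, b, (a * b)⁻¹], ?_, prod_triangleWord a b, ?_⟩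
  · rw [Finset.coe_union]
    exact Submonoid.closure_union_eq_top_of_left hA _
  · simp
  · rw [Ne, prod_reverse_triangleWord_eq_one_iff]
    exact fun h => hab h.symm
end
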